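/- arXiv:2407.04889 — 3 statements merged into one kernel-verified Lean document; each statement's English description precedes it below -/
import Mathlib

section
/- Fix η > 0, T > 0, A ∈ ℝ^{n×m} and h0 ∈ ℝ^m. The supremum of R_cont(x, h0, T) over all measurable continuous-time strategies x : [0,T] → Δ_n equals max_{x ∈ Δ_n} (1/η)·[ ln( Σ_{i=1}^m exp(η·h0_i) ) − ln( Σ_{i=1}^m exp( η·( h0_i − T·e_i^⊤ A^⊤ x ) ) ) ], and this supremum is attained by the constant strategy x(t) = x* for all t ∈ [0,T], where x* ∈ Δ_n is any maximizer of the above expression. -/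
open MeasureTheory

/-- Componentwise cumulative play of a continuous-time strategy: `∫_0^t x(s) ds`. -/
noncomputable def cumX {n : ℕ} (x : ℝ → Fin n → ℝ) (t : ℝ) (k : Fin n) : ℝ :=
  ∫ s in (0:ℝ)..t, x s k

/-- The Replicator Dynamics learner's mixed strategy at time `t`. -/
noncomputable def contPlay {n m : ℕ} (η : ℝ) (A : Matrix (Fin n) (Fin m) ℝ)
    (h0 : Fin m → ℝ) (x : ℝ → Fin n → ℝ) (t : ℝ) (i : Fin m) : ℝ :=
  Real.exp (η * (h0 i - ∑ k, cumX x t k * A k i)) /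
    ∑ j, Real.exp (η * (h0 j - ∑ k, cumX x t k * A k j))

/-- The optimizer's continuous-time reward against the Replicator Dynamics. -/
noncomputable def Rcont {n m : ℕ} (η : ℝ) (A : Matrix (Fin n) (Fin m) ℝ)
    (h0 : Fin m → ℝ) (T : ℝ) (x : ℝ → Fin n → ℝ) : ℝ :=
  ∫ t in (0:ℝ)..T, ∑ k, ∑ i, x t k * A k i * contPlay η A h0 x t i

/-- The closed-form expression
`(1/η)·[ln(Σ exp(η h0_i)) − ln(Σ exp(η(h0_i − T·e_iᵀAᵀx)))]` evaluated at a point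
`x` of the simplex. -/
noncomputable def Fclosed {n m : ℕ} (η T : ℝ) (A : Matrix (Fin n) (Fin m) ℝ)
    (h0 : Fin m → ℝ) (x : Fin n → ℝ) : ℝ :=
  (1/η) * (Real.log (∑ i, Real.exp (η * h0 i)) -
    Real.log (∑ i, Real.exp (η * (h0 i - T * ∑ k, x k * A k i))))

/-!
Write `c(t) = ∫₀ᵗ x` for the optimizer's cumulative play. The learner plays
`softmax η (h0 - c(t) ᵥ* A)`, the gradient of the convex potential `logSumExp η` at
`h0 - c(t) ᵥ* A`, so by the chain rule the optimizer's instantaneous reward is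
`-(d/dt) logSumExp η (h0 - c(t) ᵥ* A)` and the total reward telescopes to
`logSumExp η h0 - logSumExp η (h0 - c(T) ᵥ* A) = Fclosed (c(T) / T)`. It therefore depends only on
the average strategy `c(T) / T ∈ Δ_n`, and a constant strategy at a maximiser of `Fclosed` is
optimal. As `c` is merely Lipschitz, the telescoping is the fundamental theorem of calculus for
absolutely continuous functions; `logSumExp η` is `1`-Lipschitz for the sup norm because its
gradient lies in the simplex.
-/

open Set Matrix
open scoped NNReal

section LogSumExp

variable {ι : Type*} [Fintype ι] {η : ℝ}

noncomputable def logSumExp (η : ℝ) (w : ι → ℝ) : ℝ :=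
  (1 / η) * Real.log (∑ j, Real.exp (η * w j))

noncomputable def softmax (η : ℝ) (w : ι → ℝ) (j : ι) : ℝ :=
  Real.exp (η * w j) / ∑ l, Real.exp (η * w l)

variable [Nonempty ι]

lemma sum_exp_pos (f : ι → ℝ) : 0 < ∑ j, Real.exp (f j) :=
  Finset.sum_pos (fun _ _ => Real.exp_pos _) Finset.univ_nonempty

lemma softmax_nonneg (w : ι → ℝ) (j : ι) : 0 ≤ softmax η w j :=
  div_nonneg (Real.exp_pos _).le (sum_exp_pos _).le

lemma sum_softmax (w : ι → ℝ) : ∑ j, softmax η w j = 1 := by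
  simp only [softmax, ← Finset.sum_div, div_self (sum_exp_pos _).ne']

lemma sum_softmax_mul_sub_le (hη : 0 < η) (w w' : ι → ℝ) :
    ∑ j, softmax η w j * (w' j - w j) ≤ logSumExp η w' - logSumExp η w := by
  have jensen : Real.exp (∑ j, softmax η w j * (η * (w' j - w j)))
      ≤ ∑ j, softmax η w j * Real.exp (η * (w' j - w j)) := by
    simpa [smul_eq_mul] using convexOn_exp.map_sum_le (t := Finset.univ)
      (fun j _ => softmax_nonneg w j) (sum_softmax w) (fun j _ => mem_univ _)
  have ratio : ∑ j, softmax η w j * Real.exp (η * (w' j - w j))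
      = (∑ j, Real.exp (η * w' j)) / ∑ j, Real.exp (η * w j) := by
    rw [Finset.sum_div]
    refine Finset.sum_congr rfl fun j _ => ?_
    rw [softmax, div_mul_eq_mul_div, ← Real.exp_add]
    ring_nf
  have hlog := Real.log_le_log (Real.exp_pos _) (jensen.trans_eq ratio)
  rw [Real.log_exp, Real.log_div (sum_exp_pos _).ne' (sum_exp_pos _).ne'] at hlog
  simp only [logSumExp, ← mul_sub]
  rw [one_div_mul_eq_div, le_div_iff₀' hη]
  calc η * ∑ j, softmax η w j * (w' j - w j) = ∑ j, softmax η w j * (η * (w' j - w j)) := by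
        rw [Finset.mul_sum]; exact Finset.sum_congr rfl fun j _ => by ring
    _ ≤ _ := hlog

lemma logSumExp_le_add_dist (hη : 0 < η) (w w' : ι → ℝ) :
    logSumExp η w ≤ logSumExp η w' + dist w w' := by
  have hgrad := sum_softmax_mul_sub_le hη w w'
  have hdist : ∑ j, softmax η w j * (w j - w' j) ≤ dist w w' :=
    calc ∑ j, softmax η w j * (w j - w' j) ≤ ∑ j, softmax η w j * dist w w' := by
          refine Finset.sum_le_sum fun j _ => mul_le_mul_of_nonneg_left ?_ (softmax_nonneg w j)
          exact (le_abs_self _).trans ((Real.dist_eq _ _).symm.trans_le (dist_le_pi_dist w w' j))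
      _ = dist w w' := by rw [← Finset.sum_mul, sum_softmax, one_mul]
  have : ∑ j, softmax η w j * (w' j - w j) = -∑ j, softmax η w j * (w j - w' j) := by
    rw [← Finset.sum_neg_distrib]; exact Finset.sum_congr rfl fun j _ => by ring
  linarith

lemma lipschitzWith_logSumExp (hη : 0 < η) : LipschitzWith 1 (logSumExp (ι := ι) η) :=
  LipschitzWith.of_le_add_mul 1 fun w w' => by
    simpa using logSumExp_le_add_dist hη w w'

lemma HasDerivAt.logSumExp (hη : η ≠ 0) {w : ℝ → ι → ℝ} {w' : ι → ℝ} {t : ℝ}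
    (hw : ∀ j, HasDerivAt (fun s => w s j) (w' j) t) :
    HasDerivAt (fun s => logSumExp η (w s)) (∑ j, softmax η (w t) j * w' j) t := by
  have hsum : HasDerivAt (fun s => ∑ j, Real.exp (η * w s j))
      (∑ j, Real.exp (η * w t j) * (η * w' j)) t :=
    HasDerivAt.fun_sum fun j _ => ((hw j).const_mul η).exp
  refine ((hsum.log (sum_exp_pos _).ne').const_mul (1 / η)).congr_deriv ?_
  simp only [softmax, Finset.sum_div, Finset.mul_sum]
  refine Finset.sum_congr rfl fun j _ => ?_
  field_simp

end LogSumExp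

section Replicator

variable {n m : ℕ} {η T : ℝ} {A : Matrix (Fin n) (Fin m) ℝ} {h0 : Fin m → ℝ}
  {x : ℝ → Fin n → ℝ} {C : ℝ≥0}

lemma cumX_zero : cumX x 0 = 0 := by
  ext k; simp [cumX]

lemma cumX_const (z : Fin n → ℝ) (t : ℝ) : cumX (fun _ => z) t = t • z := by
  ext k; simp [cumX]

lemma contPlay_eq_softmax (t : ℝ) :
    contPlay η A h0 x t = softmax η (h0 - cumX x t ᵥ* A) := rfl

lemma Rcont_eq_integral_vecMul :
    Rcont η A h0 T x = ∫ t in (0:ℝ)..T, ∑ i, (x t ᵥ* A) i * contPlay η A h0 x t i := by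
  refine intervalIntegral.integral_congr fun t _ => ?_
  simp only [vecMul, dotProduct, Finset.sum_mul]
  exact Finset.sum_comm

lemma Fclosed_eq_logSumExp_sub (z : Fin n → ℝ) :
    Fclosed η T A h0 z = logSumExp η h0 - logSumExp η (h0 - T • (z ᵥ* A)) := by
  rw [Fclosed, mul_sub]; rfl

lemma integrableOn_apply_of_norm_le (hx : Measurable x) (hC : ∀ t ∈ Icc 0 T, ‖x t‖ ≤ C)
    (k : Fin n) : IntegrableOn (fun s => x s k) (Icc 0 T) :=
  Measure.integrableOn_of_bounded (by simp) ((measurable_pi_apply k).comp hx).aestronglyMeasurable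
    ((ae_restrict_mem measurableSet_Icc).mono fun t ht => (norm_le_pi_norm _ k).trans (hC t ht))

lemma intervalIntegrable_apply_of_norm_le (hT : 0 ≤ T) (hx : Measurable x)
    (hC : ∀ t ∈ Icc 0 T, ‖x t‖ ≤ C) (k : Fin n) : IntervalIntegrable (fun s => x s k) volume 0 T :=
  (intervalIntegrable_iff_integrableOn_Icc_of_le hT).2 (integrableOn_apply_of_norm_le hx hC k)

lemma lipschitzOnWith_cumX (hx : Measurable x) (hC : ∀ t ∈ Icc 0 T, ‖x t‖ ≤ C) :
    LipschitzOnWith C (cumX x) (Icc 0 T) := by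
  have hint : ∀ k, ∀ t ∈ Icc 0 T, IntervalIntegrable (fun s => x s k) volume 0 t :=
    fun k t ht => ((integrableOn_apply_of_norm_le hx hC k).mono_set
      (uIcc_subset_Icc (left_mem_Icc.2 (ht.1.trans ht.2)) ht)).intervalIntegrable
  refine LipschitzOnWith.of_dist_le_mul fun t ht u hu =>
    (dist_pi_le_iff (by positivity)).2 fun k => ?_
  rw [dist_eq_norm, Real.dist_eq, cumX, cumX,
    intervalIntegral.integral_interval_sub_left (hint k t ht) (hint k u hu)]
  refine intervalIntegral.norm_integral_le_of_norm_le_const fun s hs => ?_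
  have hs' : s ∈ Icc 0 T := uIcc_subset_Icc hu ht (uIoc_subset_uIcc hs)
  exact (norm_le_pi_norm _ k).trans (hC s hs')

lemma ae_hasDerivAt_cumX (hT : 0 ≤ T) (hx : Measurable x) (hC : ∀ t ∈ Icc 0 T, ‖x t‖ ≤ C) :
    ∀ᵐ t, t ∈ uIcc 0 T → ∀ k, HasDerivAt (fun s => cumX x s k) (x t k) t := by
  have hderiv : ∀ k, ∀ᵐ t, t ∈ uIcc 0 T → HasDerivAt (fun s => cumX x s k) (x t k) t := fun k =>
    ((intervalIntegrable_apply_of_norm_le hT hx hC k).ae_hasDerivAt_integral).mono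
      fun t ht htT => ht htT 0 left_mem_uIcc
  filter_upwards [ae_all_iff.2 hderiv] with t ht htT k using ht k htT

lemma inv_smul_cumX_mem_stdSimplex (hT : 0 < T)
    (hint : ∀ k, IntervalIntegrable (fun s => x s k) volume 0 T)
    (hsimplex : ∀ t ∈ Icc 0 T, x t ∈ stdSimplex ℝ (Fin n)) :
    T⁻¹ • cumX x T ∈ stdSimplex ℝ (Fin n) := by
  refine ⟨fun k => ?_, ?_⟩
  · exact smul_nonneg (inv_nonneg.2 hT.le)
      (intervalIntegral.integral_nonneg hT.le fun s hs => (hsimplex s hs).1 k)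
  · calc ∑ k, (T⁻¹ • cumX x T) k = T⁻¹ * ∫ s in (0:ℝ)..T, ∑ k, x s k := by
          simp only [Pi.smul_apply, smul_eq_mul, ← Finset.mul_sum, cumX,
            intervalIntegral.integral_finsetSum fun k _ => hint k]
      _ = T⁻¹ * ∫ _ in (0:ℝ)..T, (1 : ℝ) := by
          congr 1
          exact intervalIntegral.integral_congr fun s hs =>
            (hsimplex s (uIcc_of_le hT.le ▸ hs)).2
      _ = 1 := by simp [hT.ne']

variable [NeZero m]

theorem Rcont_eq_logSumExp_sub (hη : 0 < η) (hT : 0 ≤ T) (hx : Measurable x)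
    (hC : ∀ t ∈ Icc 0 T, ‖x t‖ ≤ C) :
    Rcont η A h0 T x = logSumExp η h0 - logSumExp η (h0 - cumX x T ᵥ* A) := by
  set g : ℝ → ℝ := fun t => logSumExp η (h0 - cumX x t ᵥ* A)
  have hg : AbsolutelyContinuousOnInterval g 0 T := by
    have := (lipschitzWith_logSumExp (ι := Fin m) hη).comp_lipschitzOnWith
      ((LipschitzWith.const h0).lipschitzOnWith.sub
        ((vecMulLinear A).toContinuousLinearMap.lipschitz.comp_lipschitzOnWith
          (lipschitzOnWith_cumX hx hC)))
    rw [← uIcc_of_le hT] at this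
    exact this.absolutelyContinuousOnInterval
  have hderiv : ∀ᵐ t, t ∈ uIoc 0 T →
      deriv g t = -∑ i, (x t ᵥ* A) i * contPlay η A h0 x t i := by
    filter_upwards [ae_hasDerivAt_cumX hT hx hC] with t ht htT
    have hw : ∀ j, HasDerivAt (fun s => (h0 - cumX x s ᵥ* A) j) (-(x t ᵥ* A) j) t := fun j => by
      simpa [vecMul, dotProduct] using (HasDerivAt.fun_sum fun k _ =>
        (ht (uIoc_subset_uIcc htT) k).mul_const (A k j)).const_sub (h0 j)
    rw [(HasDerivAt.logSumExp hη.ne' hw).deriv, ← Finset.sum_neg_distrib, contPlay_eq_softmax]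
    exact Finset.sum_congr rfl fun i _ => by ring
  calc Rcont η A h0 T x = ∫ t in (0:ℝ)..T, -deriv g t := by
        rw [Rcont_eq_integral_vecMul]
        refine intervalIntegral.integral_congr_ae (hderiv.mono fun t ht htT => ?_)
        rw [ht htT, neg_neg]
    _ = g 0 - g T := by rw [intervalIntegral.integral_neg, hg.integral_deriv_eq_sub, neg_sub]
    _ = _ := by simp [g, cumX_zero]

theorem Rcont_const_eq_Fclosed (hη : 0 < η) (hT : 0 ≤ T) (z : Fin n → ℝ) :
    Rcont η A h0 T (fun _ => z) = Fclosed η T A h0 z := by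
  rw [Rcont_eq_logSumExp_sub (C := ‖z‖₊) hη hT measurable_const (fun _ _ => le_rfl), cumX_const,
    smul_vecMul, Fclosed_eq_logSumExp_sub]

theorem exists_isMaxOn_Fclosed (hn : 0 < n) (hη : 0 < η) :
    ∃ xs ∈ stdSimplex ℝ (Fin n), ∀ x' ∈ stdSimplex ℝ (Fin n),
      Fclosed η T A h0 x' ≤ Fclosed η T A h0 xs := by
  have hcont : Continuous (Fclosed η T A h0) := by
    simp only [funext Fclosed_eq_logSumExp_sub]
    exact continuous_const.sub ((lipschitzWith_logSumExp hη).continuous.comp (by fun_prop))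
  obtain ⟨xs, hxs, hmax⟩ := (isCompact_stdSimplex ℝ (Fin n)).exists_isMaxOn
    ⟨_, single_mem_stdSimplex ℝ ⟨0, hn⟩⟩ hcont.continuousOn
  exact ⟨xs, hxs, fun x' hx' => hmax hx'⟩

end Replicator

/-- the supremum of the continuous-time reward over all measurable
strategies equals the maximum of the closed form over the simplex, and it is attained
by the constant strategy equal to any maximizer. -/
theorem stmt1 {n m : ℕ} (hn : 0 < n) (hm : 0 < m) (η T : ℝ) (hη : 0 < η) (hT : 0 < T)
    (A : Matrix (Fin n) (Fin m) ℝ) (h0 : Fin m → ℝ) :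
    (∃ xs ∈ stdSimplex ℝ (Fin n), ∀ x' ∈ stdSimplex ℝ (Fin n),
        Fclosed η T A h0 x' ≤ Fclosed η T A h0 xs) ∧
    ∀ xs ∈ stdSimplex ℝ (Fin n),
      (∀ x' ∈ stdSimplex ℝ (Fin n), Fclosed η T A h0 x' ≤ Fclosed η T A h0 xs) →
      IsGreatest {r | ∃ x : ℝ → Fin n → ℝ, Measurable x ∧
          (∀ t ∈ Set.Icc (0:ℝ) T, x t ∈ stdSimplex ℝ (Fin n)) ∧ r = Rcont η A h0 T x}
        (Fclosed η T A h0 xs) ∧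
      Rcont η A h0 T (fun _ => xs) = Fclosed η T A h0 xs := by
  have : NeZero m := ⟨hm.ne'⟩
  refine ⟨exists_isMaxOn_Fclosed hn hη, fun xs hxs hmax => ?_⟩
  have hconst := Rcont_const_eq_Fclosed (A := A) (h0 := h0) hη hT.le xs
  refine ⟨⟨⟨_, measurable_const, fun _ _ => hxs, hconst.symm⟩, ?_⟩, hconst⟩
  rintro _ ⟨x, hx, hsimplex, rfl⟩
  have hC : ∀ t ∈ Icc 0 T, ‖x t‖ ≤ (1 : ℝ≥0) := fun t ht => by
    simpa using stdSimplex_subset_closedBall (hsimplex t ht)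
  calc Rcont η A h0 T x = Fclosed η T A h0 (T⁻¹ • cumX x T) := by
        rw [Rcont_eq_logSumExp_sub hη hT.le hx hC, Fclosed_eq_logSumExp_sub, ← smul_vecMul,
          smul_inv_smul₀ hT.ne']
    _ ≤ Fclosed η T A h0 xs := hmax _ (inv_smul_cumX_mem_stdSimplex hT
      (intervalIntegrable_apply_of_norm_le hT.le hx hC) hsimplex)
end

section
/- Fix A ∈ ℝ^{n×m} and let k = min_{x ∈ MinMaxStrats(A)} |BR(x)|. For every ε > 0 there exists M > 0 such that for all η > 0 and T > 0 with η·T ≥ M, the optimal continuous-time reward with zero initial history satisfies R*_cont(0, T) ≥ T·Val(A) + ( ln(m) − ln(k) − ε )/η. -/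
open MeasureTheory

/-- The optimal continuous-time reward. -/
noncomputable def RcontStar {n m : ℕ} (η : ℝ) (A : Matrix (Fin n) (Fin m) ℝ)
    (h0 : Fin m → ℝ) (T : ℝ) : ℝ :=
  sSup {r | ∃ x : ℝ → Fin n → ℝ, Measurable x ∧
    (∀ t ∈ Set.Icc (0:ℝ) T, x t ∈ stdSimplex ℝ (Fin n)) ∧ r = Rcont η A h0 T x}

/-- The value of the zero-sum game: `Val(A) = max_{x ∈ Δ_n} min_j xᵀ A e_j`. -/
noncomputable def gameValue {n m : ℕ} (A : Matrix (Fin n) (Fin m) ℝ) : ℝ :=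
  sSup {v | ∃ x ∈ stdSimplex ℝ (Fin n), v = ⨅ j, ∑ k, x k * A k j}

open scoped Classical in
/-- The set of best responses of the learner to the optimizer's mixed strategy `x`. -/
noncomputable def BRset {n m : ℕ} (A : Matrix (Fin n) (Fin m) ℝ) (x : Fin n → ℝ) :
    Finset (Fin m) :=
  Finset.univ.filter fun j => ∀ i, ∑ k, x k * A k j ≤ ∑ k, x k * A k i

/-- `k = min_{x ∈ MinMaxStrats(A)} |BR(x)|`: the least number of best responses of a
minmax strategy of the optimizer. -/
noncomputable def minBRcard {n m : ℕ} (A : Matrix (Fin n) (Fin m) ℝ) : ℕ :=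
  sInf {c : ℕ | ∃ x ∈ stdSimplex ℝ (Fin n),
    (⨅ j, ∑ k, x k * A k j) = gameValue A ∧ c = (BRset A x).card}



/-!
Against a constant strategy `x` the learner's cumulative loss vector grows linearly, `t • (x ᵥ* A)`,
and the reward integrand `Σᵢ (x ᵥ* A)ᵢ · softmax(-η t (x ᵥ* A))ᵢ` is the derivative of
`-η⁻¹ log Σⱼ exp(-η t (x ᵥ* A)ⱼ)`. Hence the constant strategy earns exactly
`(log m - log Σⱼ exp(-η T (x ᵥ* A)ⱼ)) / η`. For a minmax strategy with `k` best responses the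
partition sum is `(k + o(1)) · exp(-η T Val(A))` as `η T → ∞`, which gives the bound.
-/

open Filter Topology Matrix Finset

section LogSumExp

variable {ι : Type*} [Fintype ι] [Nonempty ι]

lemma hasDerivAt_log_sum_exp_neg_mul (η : ℝ) (v : ι → ℝ) (t : ℝ) :
    HasDerivAt (fun t => Real.log (∑ j, Real.exp (-(η * t * v j))))
      (-η * ∑ i, v i * (Real.exp (-(η * t * v i)) / ∑ j, Real.exp (-(η * t * v j)))) t := by
  have hS : ∑ j, Real.exp (-(η * t * v j)) ≠ 0 :=
    (sum_pos (fun j _ => Real.exp_pos _) univ_nonempty).ne'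
  have hterm : ∀ j, HasDerivAt (fun t => Real.exp (-(η * t * v j)))
      (Real.exp (-(η * t * v j)) * -(η * v j)) t := fun j => by
    simpa using (((hasDerivAt_id t).const_mul η).mul_const (v j)).neg.exp
  convert (HasDerivAt.fun_sum fun j _ => hterm j).log hS using 1
  rw [mul_sum, sum_div]
  refine sum_congr rfl fun i _ => ?_
  field_simp

lemma integral_sum_mul_softmax {η : ℝ} (hη : η ≠ 0) (v : ι → ℝ) (a b : ℝ) :
    ∫ t in a..b, ∑ i, v i * (Real.exp (-(η * t * v i)) / ∑ j, Real.exp (-(η * t * v j)))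
      = η⁻¹ * (Real.log (∑ j, Real.exp (-(η * a * v j)))
          - Real.log (∑ j, Real.exp (-(η * b * v j)))) := by
  have hF : ∀ t, HasDerivAt (fun t => -η⁻¹ * Real.log (∑ j, Real.exp (-(η * t * v j))))
      (∑ i, v i * (Real.exp (-(η * t * v i)) / ∑ j, Real.exp (-(η * t * v j)))) t := fun t => by
    refine ((hasDerivAt_log_sum_exp_neg_mul η v t).const_mul (-η⁻¹)).congr_deriv ?_
    rw [← mul_assoc, neg_mul_neg, inv_mul_cancel₀ hη, one_mul]
  have hcont : Continuous fun t =>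
      ∑ i, v i * (Real.exp (-(η * t * v i)) / ∑ j, Real.exp (-(η * t * v j))) :=
    continuous_finsetSum _ fun i _ => continuous_const.mul <|
      (by fun_prop : Continuous _).div (by fun_prop)
        fun t => (sum_pos (fun j _ => Real.exp_pos _) univ_nonempty).ne'
  rw [intervalIntegral.integral_eq_sub_of_hasDerivAt (fun t _ => hF t)
    (hcont.intervalIntegrable a b)]
  ring

lemma eventually_log_sum_exp_neg_mul_le (v : ι → ℝ) {B : Finset ι}
    (hB : ∀ j, j ∈ B ↔ ∀ i, v j ≤ v i) {ε : ℝ} (hε : 0 < ε) :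
    ∀ᶠ c in atTop, Real.log (∑ j, Real.exp (-(c * v j))) ≤ Real.log #B + ε - c * ⨅ i, v i := by
  classical
  set V := ⨅ i, v i
  have hV : ∀ j, V ≤ v j := ciInf_le (Finite.bddBelow_range v)
  replace hB : ∀ j, j ∈ B ↔ v j = V := fun j =>
    (hB j).trans ⟨fun h => le_antisymm (le_ciInf h) (hV j), fun h i => h ▸ hV i⟩
  obtain ⟨j₀, hj₀⟩ := exists_eq_ciInf_of_finite (f := v)
  have hBpos : (0 : ℝ) < #B := by
    exact_mod_cast card_pos.mpr ⟨j₀, (hB j₀).mpr hj₀⟩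
  have hlim : Tendsto (fun c => ∑ j, Real.exp (-(c * (v j - V)))) atTop (𝓝 #B) := by
    have hterm : ∀ j, Tendsto (fun c => Real.exp (-(c * (v j - V)))) atTop
        (𝓝 (if j ∈ B then 1 else 0)) := fun j => by
      split_ifs with hj
      · simp [(hB j).mp hj]
      · have hgap : 0 < v j - V := sub_pos.mpr <| (hV j).lt_of_ne fun h => hj ((hB j).mpr h.symm)
        exact Real.tendsto_exp_atBot.comp
          (tendsto_neg_atTop_atBot.comp (tendsto_id.atTop_mul_const hgap))
    simpa using tendsto_finsetSum univ fun j _ => hterm j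
  have hsmall : ∀ᶠ c in atTop, ∑ j, Real.exp (-(c * (v j - V))) < #B * Real.exp ε :=
    hlim.eventually (gt_mem_nhds (lt_mul_of_one_lt_right hBpos (Real.one_lt_exp_iff.mpr hε)))
  filter_upwards [hsmall] with c hc
  have hfactor : ∑ j, Real.exp (-(c * v j))
      = (∑ j, Real.exp (-(c * (v j - V)))) * Real.exp (-(c * V)) := by
    rw [sum_mul]
    exact sum_congr rfl fun j _ => by rw [← Real.exp_add]; ring_nf
  have hpos : 0 < ∑ j, Real.exp (-(c * (v j - V))) :=
    sum_pos (fun j _ => Real.exp_pos _) univ_nonempty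
  rw [hfactor, Real.log_mul hpos.ne' (Real.exp_ne_zero _), Real.log_exp]
  have := Real.log_le_log hpos hc.le
  rw [Real.log_mul hBpos.ne' (Real.exp_ne_zero _), Real.log_exp] at this
  linarith

end LogSumExp

section Game

variable {n m : ℕ}

lemma exists_iInf_vecMul_eq_gameValue (hn : 0 < n) (A : Matrix (Fin n) (Fin m) ℝ) :
    ∃ x ∈ stdSimplex ℝ (Fin n), ⨅ j, (x ᵥ* A) j = gameValue A := by
  have husc : UpperSemicontinuous fun x : Fin n → ℝ => ⨅ j, (x ᵥ* A) j :=
    upperSemicontinuous_ciInf (fun x => Finite.bddBelow_range _)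
      fun j => (by fun_prop : Continuous fun x : Fin n → ℝ => ∑ k, x k * A k j).upperSemicontinuous
  obtain ⟨x, hx, hmax⟩ := (husc.upperSemicontinuousOn _).exists_isMaxOn
    ⟨_, single_mem_stdSimplex ℝ (⟨0, hn⟩ : Fin n)⟩ (isCompact_stdSimplex ℝ (Fin n))
  refine ⟨x, hx, ?_⟩
  have hgreatest : IsGreatest {v | ∃ x ∈ stdSimplex ℝ (Fin n), v = ⨅ j, (x ᵥ* A) j}
      (⨅ j, (x ᵥ* A) j) := ⟨⟨x, hx, rfl⟩, fun _ ⟨y, hy, hv⟩ => hv ▸ hmax hy⟩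
  exact hgreatest.csSup_eq.symm

lemma exists_card_BRset_eq_minBRcard (hn : 0 < n) (A : Matrix (Fin n) (Fin m) ℝ) :
    ∃ x ∈ stdSimplex ℝ (Fin n),
      ⨅ j, (x ᵥ* A) j = gameValue A ∧ (BRset A x).card = minBRcard A := by
  obtain ⟨x, hx, hval⟩ := exists_iInf_vecMul_eq_gameValue hn A
  obtain ⟨y, hy, hyval, hcard⟩ : minBRcard A ∈ _ := Nat.sInf_mem ⟨_, x, hx, hval, rfl⟩
  exact ⟨y, hy, hyval, hcard.symm⟩

end Game

lemma abs_sum_sum_mul_mul_le {ι κ : Type*} [Fintype ι] [Fintype κ] (B : ι → κ → ℝ)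
    {x : ι → ℝ} {y : κ → ℝ} (hx : ∀ k, x k ∈ Set.Icc 0 1) (hy : ∀ i, y i ∈ Set.Icc 0 1) :
    |∑ k, ∑ i, x k * B k i * y i| ≤ ∑ k, ∑ i, |B k i| := by
  refine (abs_sum_le_sum_abs _ _).trans <| sum_le_sum fun k _ =>
    (abs_sum_le_sum_abs _ _).trans <| sum_le_sum fun i _ => ?_
  rw [abs_mul, abs_mul, abs_of_nonneg (hx k).1, abs_of_nonneg (hy i).1]
  calc x k * |B k i| * y i ≤ 1 * |B k i| * 1 := by
        gcongr
        exacts [(hy i).1, (hx k).2, (hy i).2]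
    _ = |B k i| := by ring

section Dynamics

variable {n m : ℕ} (η : ℝ) (A : Matrix (Fin n) (Fin m) ℝ) (h0 : Fin m → ℝ)

lemma contPlay_mem_Icc (x : ℝ → Fin n → ℝ) (t : ℝ) (i : Fin m) :
    contPlay η A h0 x t i ∈ Set.Icc 0 1 := by
  have hle := single_le_sum (fun j _ => (Real.exp_pos (η * (h0 j - ∑ k, cumX x t k * A k j))).le)
    (mem_univ i)
  exact ⟨by unfold contPlay; positivity, div_le_one_of_le₀ hle (hle.trans' (Real.exp_pos _).le)⟩

lemma Rcont_le {T : ℝ} (hT : 0 ≤ T) {x : ℝ → Fin n → ℝ}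
    (hx : ∀ t ∈ Set.Icc (0:ℝ) T, x t ∈ stdSimplex ℝ (Fin n)) :
    Rcont η A h0 T x ≤ (∑ k, ∑ i, |A k i|) * T := by
  have hbound : ∀ t ∈ Set.uIoc (0:ℝ) T,
      ‖∑ k, ∑ i, x t k * A k i * contPlay η A h0 x t i‖ ≤ ∑ k, ∑ i, |A k i| := by
    intro t ht
    rw [Set.uIoc_of_le hT] at ht
    exact abs_sum_sum_mul_mul_le A
      (mem_Icc_of_mem_stdSimplex (hx t (Set.Ioc_subset_Icc_self ht))) (contPlay_mem_Icc η A h0 x t)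
  calc Rcont η A h0 T x ≤ ‖Rcont η A h0 T x‖ := le_abs_self _
    _ ≤ (∑ k, ∑ i, |A k i|) * |T - 0| := intervalIntegral.norm_integral_le_of_norm_le_const hbound
    _ = (∑ k, ∑ i, |A k i|) * T := by rw [sub_zero, abs_of_nonneg hT]

lemma Rcont_le_RcontStar {T : ℝ} (hT : 0 ≤ T) {x : ℝ → Fin n → ℝ} (hxm : Measurable x)
    (hx : ∀ t ∈ Set.Icc (0:ℝ) T, x t ∈ stdSimplex ℝ (Fin n)) :
    Rcont η A h0 T x ≤ RcontStar η A h0 T :=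
  le_csSup ⟨_, by rintro _ ⟨y, -, hy, rfl⟩; exact Rcont_le η A h0 hT hy⟩ ⟨x, hxm, hx, rfl⟩

lemma contPlay_const (x₀ : Fin n → ℝ) (t : ℝ) (i : Fin m) :
    contPlay η A (fun _ => 0) (fun _ => x₀) t i
      = Real.exp (-(η * t * (x₀ ᵥ* A) i)) / ∑ j, Real.exp (-(η * t * (x₀ ᵥ* A) j)) := by
  have hcum : ∀ j, ∑ k, cumX (fun _ => x₀) t k * A k j = t * (x₀ ᵥ* A) j := fun j => by
    simp [cumX, vecMul, dotProduct, mul_sum, mul_assoc]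
  simp only [contPlay, hcum, zero_sub, mul_neg, mul_assoc]

lemma Rcont_const [NeZero m] {η : ℝ} (hη : η ≠ 0) (x₀ : Fin n → ℝ) (T : ℝ) :
    Rcont η A (fun _ => 0) T (fun _ => x₀)
      = η⁻¹ * (Real.log m - Real.log (∑ j, Real.exp (-(η * T * (x₀ ᵥ* A) j)))) := by
  have hintegrand : ∀ t, ∑ k, ∑ i, x₀ k * A k i * contPlay η A (fun _ => 0) (fun _ => x₀) t i
      = ∑ i, (x₀ ᵥ* A) i
          * (Real.exp (-(η * t * (x₀ ᵥ* A) i)) / ∑ j, Real.exp (-(η * t * (x₀ ᵥ* A) j))) :=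
    fun t => by
      rw [sum_comm]
      simp only [contPlay_const, vecMul, dotProduct, sum_mul]
  simp only [Rcont, hintegrand, integral_sum_mul_softmax hη]
  simp

end Dynamics

/-- for every `ε > 0` there is `M > 0` such that whenever `η·T ≥ M`,
`R*_cont(0,T) ≥ T·Val(A) + (ln m − ln k − ε)/η`. -/
theorem stmt4 {n m : ℕ} (hn : 0 < n) (hm : 0 < m) (A : Matrix (Fin n) (Fin m) ℝ) :
    ∀ ε : ℝ, 0 < ε → ∃ M : ℝ, 0 < M ∧ ∀ η T : ℝ, 0 < η → 0 < T → M ≤ η * T →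
      T * gameValue A + (Real.log m - Real.log (minBRcard A) - ε) / η
        ≤ RcontStar η A (fun _ => 0) T := by
  intro ε hε
  have : NeZero m := ⟨hm.ne'⟩
  obtain ⟨x, hx, hval, hcard⟩ := exists_card_BRset_eq_minBRcard hn A
  have hBR : ∀ j, j ∈ BRset A x ↔ ∀ i, (x ᵥ* A) j ≤ (x ᵥ* A) i := fun j => by
    simp [BRset, vecMul, dotProduct]
  obtain ⟨M, hM⟩ := eventually_atTop.mp (eventually_log_sum_exp_neg_mul_le (x ᵥ* A) hBR hε)
  refine ⟨max M 1, lt_max_of_lt_right one_pos, fun η T hη hT hMT => ?_⟩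
  have hlog : Real.log (∑ j, Real.exp (-(η * T * (x ᵥ* A) j)))
      ≤ Real.log (BRset A x).card + ε - η * T * gameValue A :=
    hval ▸ hM (η * T) (le_of_max_le_left hMT)
  calc T * gameValue A + (Real.log m - Real.log (minBRcard A) - ε) / η
      = η⁻¹ * (Real.log m - Real.log (BRset A x).card - ε + η * T * gameValue A) := by
        rw [hcard]; field_simp; ring
    _ ≤ η⁻¹ * (Real.log m - Real.log (∑ j, Real.exp (-(η * T * (x ᵥ* A) j)))) := by
        gcongr
        linarith
    _ = Rcont η A (fun _ => 0) T (fun _ => x) := (Rcont_const A hη.ne' x T).symm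
    _ ≤ RcontStar η A (fun _ => 0) T :=
        Rcont_le_RcontStar η A _ hT.le measurable_const fun _ _ => hx
end

section
/- In the matching-pennies game with optimizer utility matrix A = [[1, −1], [−1, 1]], for every η > 0 and every even T ∈ ℕ, the optimal discrete-time reward against an MWU learner with step η exceeds the optimal continuous-time reward against the Replicator Dynamics with the same η by at least (T/2)·tanh(η): R*_disc(0, T) ≥ R*_cont(0, T) + (T/2)·tanh(η). -/
/-!
Let `D = Σ (x₀ - x₁)` be the optimizer's cumulative lead of heads over tails. Both learners
play `y₀ - y₁ = -tanh (η D)`, so the optimizer earns `-(x₀ - x₁) tanh (η D)` per unit of time.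
In continuous time `D' = x₀ - x₁`, so the reward is `-(log cosh (η D(T)))/η ≤ 0`; the chain rule
applies because `D`, a primitive of an integrable function, is absolutely continuous.
In discrete time the learner reacts one round late, and alternating heads and tails earns `0` on
even rounds and `tanh η` on odd ones.
-/

open MeasureTheory

/-- The MWU learner's mixed strategy at round `t` (learner matrix `−A`). -/
noncomputable def discPlay {n m : ℕ} (η : ℝ) (A : Matrix (Fin n) (Fin m) ℝ)
    (h0 : Fin m → ℝ) (x : ℕ → Fin n → ℝ) (t : ℕ) (i : Fin m) : ℝ :=
  Real.exp (η * (h0 i - ∑ s ∈ Finset.range t, ∑ k, x s k * A k i)) /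
    ∑ j, Real.exp (η * (h0 j - ∑ s ∈ Finset.range t, ∑ k, x s k * A k j))

/-- The optimizer's discrete-time reward over `T` rounds against the MWU learner. -/
noncomputable def Rdisc {n m : ℕ} (η : ℝ) (A : Matrix (Fin n) (Fin m) ℝ)
    (h0 : Fin m → ℝ) (T : ℕ) (x : ℕ → Fin n → ℝ) : ℝ :=
  ∑ t ∈ Finset.range T, ∑ k, ∑ i, x t k * A k i * discPlay η A h0 x t i

/-- The optimal discrete-time reward. -/
noncomputable def RdiscStar {n m : ℕ} (η : ℝ) (A : Matrix (Fin n) (Fin m) ℝ)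
    (h0 : Fin m → ℝ) (T : ℕ) : ℝ :=
  sSup {r | ∃ x : ℕ → Fin n → ℝ, (∀ t, x t ∈ stdSimplex ℝ (Fin n)) ∧
    r = Rdisc η A h0 T x}

/-- The matching-pennies optimizer utility matrix. -/
noncomputable def MP : Matrix (Fin 2) (Fin 2) ℝ := !![1, -1; -1, 1]

open Set

theorem LipschitzWith.comp_absolutelyContinuousOnInterval {X Y : Type*} [PseudoMetricSpace X]
    [PseudoMetricSpace Y] {g : X → Y} {K : NNReal} {f : ℝ → X} {a b : ℝ}
    (hg : LipschitzWith K g) (hf : AbsolutelyContinuousOnInterval f a b) :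
    AbsolutelyContinuousOnInterval (g ∘ f) a b := by
  rw [absolutelyContinuousOnInterval_iff] at hf ⊢
  intro ε hε
  obtain ⟨δ, hδ, hfδ⟩ := hf (ε / (K + 1)) (by positivity)
  refine ⟨δ, hδ, fun E hE hEδ => ?_⟩
  calc ∑ i ∈ Finset.range E.1, dist (g (f (E.2 i).1)) (g (f (E.2 i).2))
      ≤ ∑ i ∈ Finset.range E.1, (K + 1) * dist (f (E.2 i).1) (f (E.2 i).2) := by
        gcongr with i
        exact (hg.dist_le_mul _ _).trans (by gcongr; linarith)
    _ = (K + 1) * ∑ i ∈ Finset.range E.1, dist (f (E.2 i).1) (f (E.2 i).2) :=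
        (Finset.mul_sum _ _ _).symm
    _ < (K + 1) * (ε / (K + 1)) := by gcongr; exact hfδ E hE hEδ
    _ = ε := by field_simp

theorem intervalIntegral.integral_comp_primitive_mul_eq_sub {u φ Φ : ℝ → ℝ} {a b : ℝ}
    {K : NNReal} (hu : IntervalIntegrable u volume a b) (hΦ : LipschitzWith K Φ)
    (hΦφ : ∀ v, HasDerivAt Φ (φ v) v) :
    ∫ t in a..b, φ (∫ s in a..t, u s) * u t = Φ (∫ s in a..b, u s) - Φ 0 := by
  set F : ℝ → ℝ := fun t => ∫ s in a..t, u s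
  have hFac : AbsolutelyContinuousOnInterval F a b :=
    hu.absolutelyContinuousOnInterval_intervalIntegral left_mem_uIcc
  have hderiv : ∀ᵐ t, t ∈ uIoc a b → deriv (Φ ∘ F) t = φ (F t) * u t := by
    filter_upwards [hu.ae_hasDerivAt_integral] with t ht htab
    exact ((hΦφ (F t)).comp t (ht (uIoc_subset_uIcc htab) a left_mem_uIcc)).deriv
  rw [← intervalIntegral.integral_congr_ae hderiv,
    (hΦ.comp_absolutelyContinuousOnInterval hFac).integral_deriv_eq_sub]
  simp [F]

theorem Real.hasDerivAt_log_cosh (x : ℝ) :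
    HasDerivAt (fun x => Real.log (Real.cosh x)) (Real.tanh x) x := by
  convert (Real.hasDerivAt_cosh x).log (Real.cosh_pos x).ne' using 1
  rw [Real.tanh_eq_sinh_div_cosh]

theorem Real.lipschitzWith_log_cosh : LipschitzWith 1 (fun x => Real.log (Real.cosh x)) :=
  lipschitzWith_of_nnnorm_deriv_le (fun x => (hasDerivAt_log_cosh x).differentiableAt)
    fun x => by
      rw [(hasDerivAt_log_cosh x).deriv, ← NNReal.coe_le_coe, coe_nnnorm]
      exact (Real.abs_tanh_lt_one x).le

theorem intervalIntegral.integral_mul_tanh_primitive_nonneg {u : ℝ → ℝ} {a b c : ℝ}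
    (hc : 0 < c) (hu : IntervalIntegrable u volume a b) :
    0 ≤ ∫ t in a..b, u t * Real.tanh (c * ∫ s in a..t, u s) := by
  have hcu : IntervalIntegrable (fun t => c * u t) volume a b := hu.const_mul c
  have key := integral_comp_primitive_mul_eq_sub hcu Real.lipschitzWith_log_cosh
    Real.hasDerivAt_log_cosh
  simp only [intervalIntegral.integral_const_mul, Real.cosh_zero, Real.log_one, sub_zero] at key
  refine (mul_nonneg_iff_of_pos_left hc).mp ?_
  rw [← intervalIntegral.integral_const_mul]
  calc (0:ℝ) ≤ Real.log (Real.cosh (c * ∫ s in a..b, u s)) := Real.log_nonneg (Real.one_le_cosh _)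
    _ = _ := by rw [← key]; congr 1; ext t; ring

theorem intervalIntegrable_apply_of_mem_stdSimplex {ι : Type*} [Fintype ι] {x : ℝ → ι → ℝ}
    {T : ℝ} (hT : 0 ≤ T) (hx : Measurable x) (hxs : ∀ t ∈ Icc 0 T, x t ∈ stdSimplex ℝ ι)
    (k : ι) : IntervalIntegrable (fun t => x t k) volume 0 T := by
  refine intervalIntegrable_const (c := (1 : ℝ)).mono_fun'
    ((measurable_pi_apply k).comp hx).aestronglyMeasurable ?_
  rw [uIoc_of_le hT]
  refine ae_restrict_of_forall_mem measurableSet_Ioc fun t ht => ?_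
  have h := mem_Icc_of_mem_stdSimplex (hxs t (Ioc_subset_Icc_self ht)) k
  simpa [abs_of_nonneg h.1] using h.2

theorem abs_sub_le_one_of_mem_stdSimplex {x : Fin 2 → ℝ} (hx : x ∈ stdSimplex ℝ (Fin 2)) :
    |x 0 - x 1| ≤ 1 := by
  have h0 := mem_Icc_of_mem_stdSimplex hx 0
  have h1 := mem_Icc_of_mem_stdSimplex hx 1
  rw [abs_le]
  constructor <;> linarith [h0.1, h1.1, h0.2, h1.2]

theorem exp_div_sum_exp_sub_fin_two (g : Fin 2 → ℝ) (hg : g 1 = -g 0) :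
    Real.exp (g 0) / ∑ j, Real.exp (g j) - Real.exp (g 1) / ∑ j, Real.exp (g j) =
      Real.tanh (g 0) := by
  rw [Fin.sum_univ_two, hg, Real.tanh_eq_sinh_div_cosh, Real.sinh_eq, Real.cosh_eq]
  field_simp

theorem sum_sum_mul_MP_mul (x y : Fin 2 → ℝ) :
    ∑ k, ∑ i, x k * MP k i * y i = (x 0 - x 1) * (y 0 - y 1) := by
  simp only [Fin.sum_univ_two, MP, Matrix.of_apply, Matrix.cons_val', Matrix.cons_val_zero,
    Matrix.cons_val_one, Matrix.empty_val', Matrix.cons_val_fin_one]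
  ring

theorem sum_mul_MP_zero (w : Fin 2 → ℝ) : ∑ k, w k * MP k 0 = w 0 - w 1 := by
  simp [Fin.sum_univ_two, MP, sub_eq_add_neg]

theorem sum_mul_MP_one (w : Fin 2 → ℝ) : ∑ k, w k * MP k 1 = -(w 0 - w 1) := by
  simp [Fin.sum_univ_two, MP, neg_add_eq_sub]

theorem contPlay_MP_sub (η : ℝ) (x : ℝ → Fin 2 → ℝ) (t : ℝ) :
    contPlay η MP (fun _ => 0) x t 0 - contPlay η MP (fun _ => 0) x t 1 =
      -Real.tanh (η * (cumX x t 0 - cumX x t 1)) := by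
  have h0 : η * (0 - ∑ k, cumX x t k * MP k 0) = -(η * (cumX x t 0 - cumX x t 1)) := by
    rw [sum_mul_MP_zero]; ring
  rw [← Real.tanh_neg, ← h0]
  refine exp_div_sum_exp_sub_fin_two (fun i => η * (0 - ∑ k, cumX x t k * MP k i)) ?_
  simp only [sum_mul_MP_zero, sum_mul_MP_one]
  ring

theorem discPlay_MP_sub (η : ℝ) (x : ℕ → Fin 2 → ℝ) (t : ℕ) :
    discPlay η MP (fun _ => 0) x t 0 - discPlay η MP (fun _ => 0) x t 1 =
      -Real.tanh (η * ∑ s ∈ Finset.range t, (x s 0 - x s 1)) := by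
  have h0 : η * (0 - ∑ s ∈ Finset.range t, ∑ k, x s k * MP k 0) =
      -(η * ∑ s ∈ Finset.range t, (x s 0 - x s 1)) := by
    simp only [sum_mul_MP_zero]; ring
  rw [← Real.tanh_neg, ← h0]
  refine exp_div_sum_exp_sub_fin_two
    (fun i => η * (0 - ∑ s ∈ Finset.range t, ∑ k, x s k * MP k i)) ?_
  simp only [sum_mul_MP_zero, sum_mul_MP_one, Finset.sum_neg_distrib]
  ring

theorem Rcont_MP (η T : ℝ) (x : ℝ → Fin 2 → ℝ) :
    Rcont η MP (fun _ => 0) T x =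
      -∫ t in (0:ℝ)..T, (x t 0 - x t 1) * Real.tanh (η * (cumX x t 0 - cumX x t 1)) := by
  rw [Rcont, ← intervalIntegral.integral_neg]
  congr 1
  ext t
  rw [sum_sum_mul_MP_mul, contPlay_MP_sub]
  ring

theorem Rdisc_MP (η : ℝ) (T : ℕ) (x : ℕ → Fin 2 → ℝ) :
    Rdisc η MP (fun _ => 0) T x =
      -∑ t ∈ Finset.range T,
        (x t 0 - x t 1) * Real.tanh (η * ∑ s ∈ Finset.range t, (x s 0 - x s 1)) := by
  rw [Rdisc, ← Finset.sum_neg_distrib]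
  congr 1
  ext t
  rw [sum_sum_mul_MP_mul, discPlay_MP_sub]
  ring

theorem Rcont_MP_nonpos {η T : ℝ} (hη : 0 < η) (hT : 0 ≤ T) {x : ℝ → Fin 2 → ℝ}
    (hx : Measurable x) (hxs : ∀ t ∈ Icc 0 T, x t ∈ stdSimplex ℝ (Fin 2)) :
    Rcont η MP (fun _ => 0) T x ≤ 0 := by
  have hint := intervalIntegrable_apply_of_mem_stdSimplex hT hx hxs
  have hcum : ∀ t ∈ uIcc 0 T, cumX x t 0 - cumX x t 1 = ∫ s in (0:ℝ)..t, (x s 0 - x s 1) :=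
    fun t ht => (intervalIntegral.integral_sub ((hint 0).mono_set (uIcc_subset_uIcc_left ht))
      ((hint 1).mono_set (uIcc_subset_uIcc_left ht))).symm
  rw [Rcont_MP, neg_nonpos]
  convert intervalIntegral.integral_mul_tanh_primitive_nonneg hη ((hint 0).sub (hint 1)) using 1
  exact intervalIntegral.integral_congr fun t ht => by simp only [hcum t ht]

theorem RcontStar_MP_nonpos {η T : ℝ} (hη : 0 < η) (hT : 0 ≤ T) :
    RcontStar η MP (fun _ => 0) T ≤ 0 :=
  Real.sSup_le (by rintro _ ⟨x, hx, hxs, rfl⟩; exact Rcont_MP_nonpos hη hT hx hxs) le_rfl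

theorem Rdisc_MP_le (η : ℝ) (T : ℕ) {x : ℕ → Fin 2 → ℝ}
    (hx : ∀ t, x t ∈ stdSimplex ℝ (Fin 2)) : Rdisc η MP (fun _ => 0) T x ≤ T := by
  rw [Rdisc_MP, ← Finset.sum_neg_distrib]
  calc _ ≤ ∑ _t ∈ Finset.range T, (1 : ℝ) := Finset.sum_le_sum fun t _ =>
        (neg_le_abs _).trans <| by
          rw [abs_mul]
          exact mul_le_one₀ (abs_sub_le_one_of_mem_stdSimplex (hx t)) (abs_nonneg _)
            (Real.abs_tanh_lt_one _).le
    _ = T := by simp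

/-- After a round of heads the learner leans towards tails; the optimizer matches it by playing
tails, which resets the lead to `0`. -/
noncomputable def alternatingPlay (t : ℕ) : Fin 2 → ℝ :=
  if Even t then Pi.single 0 1 else Pi.single 1 1

theorem alternatingPlay_mem_stdSimplex (t : ℕ) : alternatingPlay t ∈ stdSimplex ℝ (Fin 2) := by
  unfold alternatingPlay
  split_ifs <;> exact single_mem_stdSimplex ℝ _

theorem alternatingPlay_sub (t : ℕ) :
    alternatingPlay t 0 - alternatingPlay t 1 = if Even t then 1 else -1 := by
  unfold alternatingPlay
  split_ifs <;> simp

theorem sum_range_two_mul_alternatingPlay_sub (m : ℕ) :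
    ∑ s ∈ Finset.range (2 * m), (alternatingPlay s 0 - alternatingPlay s 1) = 0 := by
  induction m with
  | zero => simp
  | succ m ih =>
    rw [mul_add_one, Finset.sum_range_succ, Finset.sum_range_succ, ih, alternatingPlay_sub,
      alternatingPlay_sub]
    simp [parity_simps]

theorem Rdisc_MP_alternatingPlay (η : ℝ) (m : ℕ) :
    Rdisc η MP (fun _ => 0) (2 * m) alternatingPlay = m * Real.tanh η := by
  rw [Rdisc_MP, neg_eq_iff_eq_neg]
  induction m with
  | zero => simp
  | succ m ih =>
    rw [mul_add_one, Finset.sum_range_succ, Finset.sum_range_succ, ih,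
      Finset.sum_range_succ, sum_range_two_mul_alternatingPlay_sub, alternatingPlay_sub,
      alternatingPlay_sub]
    simp only [even_two, Even.mul_right, ↓reduceIte, mul_zero, Real.tanh_zero, add_zero,
      Nat.not_even_bit1, zero_add, mul_one, neg_mul, one_mul, Nat.cast_add, Nat.cast_one]
    ring

theorem RdiscStar_MP_ge (η : ℝ) {T : ℕ} (hT : Even T) :
    (T : ℝ) / 2 * Real.tanh η ≤ RdiscStar η MP (fun _ => 0) T := by
  obtain ⟨m, rfl⟩ := hT
  refine le_csSup ⟨_, fun r ⟨x, hx, hr⟩ => hr ▸ Rdisc_MP_le η (m + m) hx⟩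
    ⟨alternatingPlay, alternatingPlay_mem_stdSimplex, ?_⟩
  rw [← two_mul, Rdisc_MP_alternatingPlay]
  push_cast
  ring

/-- in matching pennies, for every `η > 0` and even `T`,
`R*_disc(0,T) ≥ R*_cont(0,T) + (T/2)·tanh η`. -/
theorem stmt9 (η : ℝ) (hη : 0 < η) (T : ℕ) (hT : Even T) :
    RcontStar η MP (fun _ => 0) (T : ℝ) + (T : ℝ) / 2 * Real.tanh η ≤
      RdiscStar η MP (fun _ => 0) T := by
  linarith [RcontStar_MP_nonpos hη (Nat.cast_nonneg T), RdiscStar_MP_ge η hT]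
end
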